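/- arXiv:2402.08651 — 3 statements merged into one kernel-verified Lean document; each statement's English description precedes it below -/
import Mathlib

section
/- Let s ≥ t ≥ 2, n ≥ 2s + t − 1, let F' be the lantern construction and F = F' ∪ F_5 the completed construction. Then F is induced K_{s,t}-saturated. -/
open Finset

/-- A family of finite sets contains an induced copy of the complete bipartite
poset `K_{s,t}`: `s` pairwise incomparable "upper" sets and `t` pairwise
incomparable "lower" sets, each lower set strictly contained in each upper set. -/
def ContainsIndKst (s t : ℕ) (F : Finset (Finset ℕ)) : Prop :=
  ∃ (U : Fin s → Finset ℕ) (D : Fin t → Finset ℕ),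
    (∀ i, U i ∈ F) ∧ (∀ j, D j ∈ F) ∧
    (∀ i j, i ≠ j → ¬ U i ⊆ U j) ∧
    (∀ i j, i ≠ j → ¬ D i ⊆ D j) ∧
    (∀ i j, D j ⊂ U i)

/-- `F ⊆ 2^[n]` is induced `K_{s,t}`-saturated. -/
def IsIndKstSaturated (n s t : ℕ) (F : Finset (Finset ℕ)) : Prop :=
  (∀ A ∈ F, A ⊆ Finset.Icc 1 n) ∧
  ¬ ContainsIndKst s t F ∧
  ∀ G ⊆ Finset.Icc 1 n, G ∉ F → ContainsIndKst s t (insert G F)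

/-- `sat*(n, K_{s,t})`: minimum size of an induced `K_{s,t}`-saturated family in `2^[n]`. -/
noncomputable def satStarKst (n s t : ℕ) : ℕ :=
  sInf {m | ∃ F : Finset (Finset ℕ), IsIndKstSaturated n s t F ∧ F.card = m}

/-- `C` is a complete chain from `A` to `B`: totally ordered by inclusion,
with minimum `A`, maximum `B`, and `|C| = |B \ A| + 1`. -/
def IsCompleteChain (A B : Finset ℕ) (C : Finset (Finset ℕ)) : Prop :=
  A ∈ C ∧ B ∈ C ∧ (∀ X ∈ C, A ⊆ X ∧ X ⊆ B) ∧
  (∀ X ∈ C, ∀ Y ∈ C, X ⊆ Y ∨ Y ⊆ X) ∧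
  C.card = (B \ A).card + 1

/-- The first increment set of `L` (w.r.t. bottom `A`): the union of the sets in
`L` of size `|A| + 1`, minus `A`. -/
def firstIncrementSet (A : Finset ℕ) (L : Finset (Finset ℕ)) : Finset ℕ :=
  ((L.filter fun X => X.card = A.card + 1).sup id) \ A

/-- The last increment set of `L` (w.r.t. top `B`): `B` minus the intersection of
the sets in `L` of size `|B| - 1`. -/
def lastIncrementSet (B : Finset ℕ) (L : Finset (Finset ℕ)) : Finset ℕ :=
  B.filter fun x => ∃ X ∈ L, X.card = B.card - 1 ∧ x ∉ X

/-- `L` is a union of `k` pairwise internally disjoint complete chains from `A` to `B`. -/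
def IsLanternUnion (A B : Finset ℕ) (k : ℕ) (L : Finset (Finset ℕ)) : Prop :=
  ∃ C : Fin k → Finset (Finset ℕ),
    (∀ i, IsCompleteChain A B (C i)) ∧
    (∀ i j, i ≠ j → C i ∩ C j = {A, B}) ∧
    L = Finset.univ.biUnion C

/-- An upper `s`-lantern on `A`: a union of `s - 1` pairwise internally disjoint
complete chains from `A` to `A ∪ [s+t+1, n]` whose last increment set is
`[s+t+1, 2s+t-1]`. -/
def IsUpperLantern (n s t : ℕ) (A : Finset ℕ) (L : Finset (Finset ℕ)) : Prop :=
  IsLanternUnion A (A ∪ Finset.Icc (s+t+1) n) (s-1) L ∧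
  lastIncrementSet (A ∪ Finset.Icc (s+t+1) n) L = Finset.Icc (s+t+1) (2*s+t-1)

/-- A lower `t`-lantern on `A`: a union of `t - 1` pairwise internally disjoint
complete chains from `A` to `A ∪ [s+t+1, n]` whose first increment set is
`[s+t+1, s+2t-1]`. -/
def IsLowerLantern (n s t : ℕ) (A : Finset ℕ) (L : Finset (Finset ℕ)) : Prop :=
  IsLanternUnion A (A ∪ Finset.Icc (s+t+1) n) (t-1) L ∧
  firstIncrementSet A L = Finset.Icc (s+t+1) (s+2*t-1)

/-- `F₁ = {[n]} ∪ {[n] \ {x} : x ∈ [s+t-1]}`. -/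
def lanternF1 (n s t : ℕ) : Finset (Finset ℕ) :=
  insert (Finset.Icc 1 n) ((Finset.Icc 1 (s+t-1)).image fun x => (Finset.Icc 1 n).erase x)

/-- `F₂`: union over all `t`-element subsets `A` of `[s+t-1]` of the chosen upper lantern `Ls A`. -/
def lanternF2 (s t : ℕ) (Ls : Finset ℕ → Finset (Finset ℕ)) : Finset (Finset ℕ) :=
  (Finset.powersetCard t (Finset.Icc 1 (s+t-1))).biUnion Ls

/-- `F₃`: union over all `(t-1)`-element subsets `A` of `[s+t-1]` of the chosen
lower lantern `Lt (A ∪ {s+t})`. -/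
def lanternF3 (s t : ℕ) (Lt : Finset ℕ → Finset (Finset ℕ)) : Finset (Finset ℕ) :=
  (Finset.powersetCard (t-1) (Finset.Icc 1 (s+t-1))).biUnion fun A => Lt (insert (s+t) A)

/-- `F₄ = {∅} ∪ {{x} : x ∈ [s+t-1]}`. -/
def lanternF4 (s t : ℕ) : Finset (Finset ℕ) :=
  insert ∅ ((Finset.Icc 1 (s+t-1)).image fun x => ({x} : Finset ℕ))

/-- The lantern construction `F' = F₁ ∪ F₂ ∪ F₃ ∪ F₄`. -/
def lanternFam (n s t : ℕ) (Ls Lt : Finset ℕ → Finset (Finset ℕ)) : Finset (Finset ℕ) :=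
  lanternF1 n s t ∪ lanternF2 s t Ls ∪ lanternF3 s t Lt ∪ lanternF4 s t

/-- `G₁ = ⋃_{i=2}^{s} {[n] \ A : A an i-element subset of [2s+t-1]}`. -/
def lanternG1 (n s t : ℕ) : Finset (Finset ℕ) :=
  (Finset.Icc 2 s).biUnion fun i =>
    (Finset.powersetCard i (Finset.Icc 1 (2*s+t-1))).image fun A => Finset.Icc 1 n \ A

/-- `G₂ = ⋃_{i=2}^{t} {A : A an i-element subset of [s+2t-1]}`. -/
def lanternG2 (s t : ℕ) : Finset (Finset ℕ) :=
  (Finset.Icc 2 t).biUnion fun i => Finset.powersetCard i (Finset.Icc 1 (s+2*t-1))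

/-!
Freeness is the hypothesis on `F₅`, and a set of `G₁ ∪ G₂` outside `F₅` is handled by the
maximality of `F₅`. Every other `G ⊆ [n]` outside `F` is completed to an induced `K_{s,t}`
according to how many elements it has in `[s+t]`. With at most `t` of them, `G` is a lower
vertex below `s` co-singletons `[n] ∖ {x}`; the other lower vertices are singletons, or the
sets of the size of `G` in the lower lantern through `G`, or second-level sets `R ∪ {z}` of a
lower lantern (a set below some `R ∪ {z}` that is not in `F₄` lies in `G₂`). With more than
`t`, `G` is an upper vertex above `t` singletons; the other upper vertices are the sets of the
size of `G` in the upper lantern through `G`, or penultimate sets of an upper lantern. These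
fail only when `G` contains all of `[s+t+1, n]` but one point `y ≤ 2s+t-1`; then `G ∉ G₁`
forces `G = [n] ∖ {v}`, and co-singletons serve as the other upper vertices.
-/

section InducedCopies

variable {s t : ℕ} {F : Finset (Finset ℕ)}

theorem ContainsIndKst.mono {F' : Finset (Finset ℕ)} (h : ContainsIndKst s t F) (hF : F ⊆ F') :
    ContainsIndKst s t F' := by
  obtain ⟨U, D, hU, hD, hUU, hDD, hDU⟩ := h
  exact ⟨U, D, fun i => hF (hU i), fun j => hF (hD j), hUU, hDD, hDU⟩

theorem containsIndKst_of_antichains {𝒰 𝒟 : Finset (Finset ℕ)} (hU : 𝒰 ⊆ F) (hD : 𝒟 ⊆ F)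
    (hUcard : #𝒰 = s) (hDcard : #𝒟 = t)
    (hUanti : IsAntichain (· ⊆ ·) (𝒰 : Set (Finset ℕ)))
    (hDanti : IsAntichain (· ⊆ ·) (𝒟 : Set (Finset ℕ)))
    (hDU : ∀ D ∈ 𝒟, ∀ U ∈ 𝒰, D ⊂ U) : ContainsIndKst s t F := by
  let eU := (Finset.equivFinOfCardEq hUcard).symm
  let eD := (Finset.equivFinOfCardEq hDcard).symm
  refine ⟨fun i => eU i, fun j => eD j, fun i => hU (eU i).2, fun j => hD (eD j).2,
    fun i j hij => hUanti (eU i).2 (eU j).2 ?_, fun i j hij => hDanti (eD i).2 (eD j).2 ?_,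
    fun i j => hDU _ (eD j).2 _ (eU i).2⟩
  · exact fun h => hij (eU.injective (Subtype.ext h))
  · exact fun h => hij (eD.injective (Subtype.ext h))

end InducedCopies

section FinsetFamilies

variable {α : Type*}

theorem singleton_ssubset_of_mem {x : α} {U : Finset α} (hx : x ∈ U) (hU : 1 < #U) :
    {x} ⊂ U :=
  (singleton_subset_iff.2 hx).ssubset_of_ne fun h => by simp [← h] at hU

variable [DecidableEq α]

theorem isAntichain_insert_of_incomparable {𝒜 : Finset (Finset α)} {G : Finset α}
    (h𝒜 : IsAntichain (· ⊆ ·) (𝒜 : Set (Finset α)))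
    (hG : ∀ X ∈ 𝒜, ¬ G ⊆ X ∧ ¬ X ⊆ G) :
    IsAntichain (· ⊆ ·) (↑(insert G 𝒜) : Set (Finset α)) := by
  rw [coe_insert]
  exact h𝒜.insert (fun X hX _ => (hG X hX).2) (fun X hX _ => (hG X hX).1)

theorem ssubset_erase_of_card_lt {x : α} {B C : Finset α} (hB : B ⊆ C) (hxB : x ∉ B)
    (hcard : #B + 1 < #C) : B ⊂ C.erase x := by
  refine (subset_erase.2 ⟨hB, hxB⟩).ssubset_of_ne fun h => ?_
  have : #C - 1 ≤ #(C.erase x) := pred_card_le_card_erase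
  rw [← h] at this
  omega

theorem card_image_erase {B X : Finset α} (hX : X ⊆ B) : #(X.image B.erase) = #X :=
  card_image_of_injOn ((erase_injOn B).mono hX)

theorem card_image_singleton (X : Finset α) : #(X.image ({·} : α → Finset α)) = #X :=
  card_image_of_injective X singleton_injective

theorem sized_image_erase {B X : Finset α} (hX : X ⊆ B) :
    (↑(X.image B.erase) : Set (Finset α)).Sized (#B - 1) := by
  intro Y hY
  obtain ⟨x, hx, rfl⟩ := mem_image.1 hY
  exact card_erase_of_mem (hX hx)

theorem sized_image_singleton (X : Finset α) :
    (↑(X.image ({·} : α → Finset α)) : Set (Finset α)).Sized 1 := by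
  intro Y hY
  obtain ⟨x, -, rfl⟩ := mem_image.1 hY
  exact card_singleton x

end FinsetFamilies

theorem IsCompleteChain.exists_card_eq {A B : Finset ℕ} {C : Finset (Finset ℕ)}
    (h : IsCompleteChain A B C) {c : ℕ} (hAc : #A ≤ c) (hcB : c ≤ #B) :
    ∃ X ∈ C, #X = c := by
  obtain ⟨hA, -, hbetween, hchain, hcard⟩ := h
  have hAB : A ⊆ B := (hbetween A hA).2
  -- A chain is determined by its cardinalities, so `card` maps `C` onto `[#A, #B]`.
  have hinj : Set.InjOn card (C : Set (Finset ℕ)) := fun X hX Y hY hXY =>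
    (hchain X hX Y hY).elim (fun h => eq_of_subset_of_card_le h hXY.ge)
      (fun h => (eq_of_subset_of_card_le h hXY.le).symm)
  have himage : C.image card = Icc #A #B := by
    refine eq_of_subset_of_card_le (fun c hc => ?_) ?_
    · obtain ⟨X, hX, rfl⟩ := mem_image.1 hc
      exact mem_Icc.2 ⟨card_le_card (hbetween X hX).1, card_le_card (hbetween X hX).2⟩
    · rw [card_image_of_injOn hinj, hcard, card_sdiff_of_subset hAB, Nat.card_Icc]
      omega
  simpa [eq_comm] using himage.ge (mem_Icc.2 ⟨hAc, hcB⟩)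

namespace IsLanternUnion

variable {A B : Finset ℕ} {k : ℕ} {L : Finset (Finset ℕ)}

theorem subset_of_mem (h : IsLanternUnion A B k L) {X : Finset ℕ} (hX : X ∈ L) :
    A ⊆ X ∧ X ⊆ B := by
  obtain ⟨C, hC, -, rfl⟩ := h
  obtain ⟨i, -, hi⟩ := mem_biUnion.1 hX
  exact (hC i).2.2.1 X hi

theorem bot_mem (h : IsLanternUnion A B k L) (hk : k ≠ 0) : A ∈ L := by
  obtain ⟨C, hC, -, rfl⟩ := h
  exact mem_biUnion.2 ⟨⟨0, Nat.pos_of_ne_zero hk⟩, mem_univ _, (hC _).1⟩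

theorem top_mem (h : IsLanternUnion A B k L) (hk : k ≠ 0) : B ∈ L := by
  obtain ⟨C, hC, -, rfl⟩ := h
  exact mem_biUnion.2 ⟨⟨0, Nat.pos_of_ne_zero hk⟩, mem_univ _, (hC _).2.1⟩

theorem exists_level (h : IsLanternUnion A B k L) {c : ℕ} (hAc : #A < c) (hcB : c < #B) :
    ∃ 𝒞 ⊆ L, #𝒞 = k ∧ (𝒞 : Set (Finset ℕ)).Sized c := by
  obtain ⟨C, hC, hdisj, rfl⟩ := h
  choose f hfC hfcard using fun i => (hC i).exists_card_eq hAc.le hcB.le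
  have hinj : Function.Injective f := fun i j hij => by
    by_contra hne
    have hmem : f i ∈ C i ∩ C j := mem_inter.2 ⟨hfC i, hij ▸ hfC j⟩
    rw [hdisj i j hne, mem_insert, mem_singleton] at hmem
    have := hfcard i
    rcases hmem with h | h <;> rw [h] at this <;> omega
  refine ⟨univ.image f, fun X hX => ?_, ?_, fun X hX => ?_⟩
  · obtain ⟨i, -, rfl⟩ := mem_image.1 hX
    exact mem_biUnion.2 ⟨i, mem_univ _, hfC i⟩
  · rw [card_image_of_injective _ hinj, card_univ, Fintype.card_fin]
  · obtain ⟨i, -, rfl⟩ := mem_image.1 (mem_coe.1 hX)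
    exact hfcard i

theorem erase_mem_of_mem_lastIncrementSet (h : IsLanternUnion A B k L) {y : ℕ}
    (hy : y ∈ lastIncrementSet B L) : B.erase y ∈ L := by
  obtain ⟨hyB, X, hXL, hXcard, hyX⟩ := mem_filter.1 hy
  have hXB : X ⊆ B.erase y := subset_erase.2 ⟨(h.subset_of_mem hXL).2, hyX⟩
  rwa [← eq_of_subset_of_card_le hXB (by rw [card_erase_of_mem hyB, hXcard])]

theorem insert_mem_of_mem_firstIncrementSet (h : IsLanternUnion A B k L) {z : ℕ}
    (hz : z ∈ firstIncrementSet A L) : insert z A ∈ L := by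
  obtain ⟨hzsup, hzA⟩ := mem_sdiff.1 hz
  obtain ⟨X, hXf, hzX⟩ := mem_sup.1 hzsup
  obtain ⟨hXL, hXcard⟩ := mem_filter.1 hXf
  have hzAX : insert z A ⊆ X := insert_subset hzX (h.subset_of_mem hXL).1
  rwa [eq_of_subset_of_card_le hzAX (by rw [card_insert_of_notMem hzA, hXcard])]

theorem exists_level_of_between {G : Finset ℕ} (h : IsLanternUnion A B k L) (hk : k ≠ 0)
    (hAG : A ⊆ G) (hGB : G ⊆ B) (hGL : G ∉ L) :
    ∃ 𝒞 ⊆ L, #𝒞 = k ∧ (↑(insert G 𝒞) : Set (Finset ℕ)).Sized #G := by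
  have hAG' : A ⊂ G := hAG.ssubset_of_ne fun hAG => hGL (hAG ▸ h.bot_mem hk)
  have hGB' : G ⊂ B := hGB.ssubset_of_ne fun hGB => hGL (hGB ▸ h.top_mem hk)
  obtain ⟨𝒞, h𝒞L, h𝒞card, h𝒞sized⟩ := h.exists_level (card_lt_card hAG') (card_lt_card hGB')
  refine ⟨𝒞, h𝒞L, h𝒞card, fun X hX => ?_⟩
  rcases mem_insert.1 (mem_coe.1 hX) with rfl | hX
  · rfl
  · exact h𝒞sized hX

end IsLanternUnion

section LanternFamily

variable {n s t : ℕ} {Ls Lt : Finset ℕ → Finset (Finset ℕ)} {G : Finset ℕ}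

theorem Icc_mem_lanternFam : Icc 1 n ∈ lanternFam n s t Ls Lt := by
  simp [lanternFam, lanternF1]

theorem empty_mem_lanternFam : ∅ ∈ lanternFam n s t Ls Lt := by
  simp [lanternFam, lanternF4]

theorem erase_mem_lanternFam {x : ℕ} (hx : x ∈ Icc 1 (s+t-1)) :
    (Icc 1 n).erase x ∈ lanternFam n s t Ls Lt := by
  simp only [lanternFam, lanternF1, mem_union, mem_insert, mem_image]
  exact Or.inl (Or.inl (Or.inl (Or.inr ⟨x, hx, rfl⟩)))

theorem singleton_mem_lanternFam {x : ℕ} (hx : x ∈ Icc 1 (s+t-1)) :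
    {x} ∈ lanternFam n s t Ls Lt := by
  simp only [lanternFam, lanternF4, mem_union, mem_insert, mem_image]
  exact Or.inr (Or.inr ⟨x, hx, rfl⟩)

theorem image_erase_subset_lanternFam {X : Finset ℕ} (hX : X ⊆ Icc 1 (s+t-1)) :
    X.image (Icc 1 n).erase ⊆ lanternFam n s t Ls Lt := fun Y hY => by
  obtain ⟨x, hx, rfl⟩ := mem_image.1 hY
  exact erase_mem_lanternFam (hX hx)

theorem image_singleton_subset_lanternFam {X : Finset ℕ} (hX : X ⊆ Icc 1 (s+t-1)) :
    X.image ({·} : ℕ → Finset ℕ) ⊆ lanternFam n s t Ls Lt := fun Y hY => by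
  obtain ⟨x, hx, rfl⟩ := mem_image.1 hY
  exact singleton_mem_lanternFam (hX hx)

theorem upperLantern_subset_lanternFam {A : Finset ℕ}
    (hA : A ∈ powersetCard t (Icc 1 (s+t-1))) : Ls A ⊆ lanternFam n s t Ls Lt :=
  fun _ hX => mem_union_left _ (mem_union_left _ (mem_union_right _ (mem_biUnion.2 ⟨A, hA, hX⟩)))

theorem lowerLantern_subset_lanternFam {A : Finset ℕ}
    (hA : A ∈ powersetCard (t-1) (Icc 1 (s+t-1))) :
    Lt (insert (s+t) A) ⊆ lanternFam n s t Ls Lt :=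
  fun _ hX => mem_union_left _ (mem_union_right _ (mem_biUnion.2 ⟨A, hA, hX⟩))

theorem union_Icc_subset_Icc {A : Finset ℕ} (hA : A ⊆ Icc 1 (s+t)) (hn : s + t ≤ n) :
    A ∪ Icc (s+t+1) n ⊆ Icc 1 n :=
  union_subset (hA.trans (Icc_subset_Icc le_rfl hn)) (Icc_subset_Icc (by omega) le_rfl)

theorem subset_Icc_of_mem_lanternFam (hts : t ≤ s) (ht : 0 < t) (hn : 2*s + t - 1 ≤ n)
    (hLs : ∀ A ∈ powersetCard t (Icc 1 (s+t-1)), IsUpperLantern n s t A (Ls A))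
    (hLt : ∀ A ∈ powersetCard (t-1) (Icc 1 (s+t-1)),
      IsLowerLantern n s t (insert (s+t) A) (Lt (insert (s+t) A)))
    {X : Finset ℕ} (hX : X ∈ lanternFam n s t Ls Lt) : X ⊆ Icc 1 n := by
  have hS : Icc 1 (s+t-1) ⊆ Icc 1 (s+t) := Icc_subset_Icc le_rfl (by omega)
  simp only [lanternFam, lanternF1, lanternF2, lanternF3, lanternF4, mem_union, mem_insert,
    mem_image, mem_biUnion] at hX
  rcases hX with (((rfl | ⟨x, -, rfl⟩) | ⟨A, hA, hXA⟩) | ⟨A, hA, hXA⟩) | (rfl | ⟨x, hx, rfl⟩)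
  · exact Subset.rfl
  · exact erase_subset x _
  · refine ((hLs A hA).1.subset_of_mem hXA).2.trans (union_Icc_subset_Icc ?_ (by omega))
    exact (mem_powersetCard.1 hA).1.trans hS
  · refine ((hLt A hA).1.subset_of_mem hXA).2.trans (union_Icc_subset_Icc ?_ (by omega))
    exact insert_subset (by simp; omega) ((mem_powersetCard.1 hA).1.trans hS)
  · exact empty_subset _
  · have := mem_Icc.1 hx
    exact singleton_subset_iff.2 (mem_Icc.2 ⟨this.1, by omega⟩)

theorem subset_Icc_of_mem_lanternG (hts : t ≤ s) (hn : 2*s + t - 1 ≤ n) {X : Finset ℕ}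
    (hX : X ∈ lanternG1 n s t ∪ lanternG2 s t) : X ⊆ Icc 1 n := by
  simp only [lanternG1, lanternG2, mem_union, mem_biUnion, mem_image, mem_powersetCard] at hX
  rcases hX with ⟨-, -, K, -, rfl⟩ | ⟨-, -, hX, -⟩
  · exact sdiff_subset
  · exact hX.trans (Icc_subset_Icc le_rfl (by omega))

theorem card_le_one_of_notMem_lanternG2 {X : Finset ℕ} (hX : X ⊆ Icc 1 (s+2*t-1))
    (hXG2 : X ∉ lanternG2 s t) (hcard : #X ≤ t) : #X ≤ 1 := by
  by_contra! h
  exact hXG2 (mem_biUnion.2 ⟨#X, mem_Icc.2 ⟨h, hcard⟩, mem_powersetCard.2 ⟨hX, rfl⟩⟩)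

theorem card_le_one_of_notMem_lanternG1 {K : Finset ℕ} (hK : K ⊆ Icc 1 (2*s+t-1))
    (hKG1 : Icc 1 n \ K ∉ lanternG1 n s t) (hcard : #K ≤ s) : #K ≤ 1 := by
  by_contra! h
  exact hKG1 (mem_biUnion.2 ⟨#K, mem_Icc.2 ⟨h, hcard⟩,
    mem_image.2 ⟨K, mem_powersetCard.2 ⟨hK, rfl⟩, rfl⟩⟩)

theorem card_union_Icc {A : Finset ℕ} (hA : A ⊆ Icc 1 (s+t)) :
    #(A ∪ Icc (s+t+1) n) = #A + (n - (s+t)) := by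
  rw [card_union_of_disjoint, Nat.card_Icc]
  · omega
  · exact disjoint_left.2 fun v hvA hvH => by
      have := mem_Icc.1 (hA hvA); have := mem_Icc.1 hvH; omega

theorem ssubset_erase_of_notMem_lanternFam (hGn : G ⊆ Icc 1 n)
    (hGF : G ∉ lanternFam n s t Ls Lt) {x : ℕ} (hx : x ∈ Icc 1 (s+t-1)) (hxG : x ∉ G) :
    G ⊂ (Icc 1 n).erase x :=
  (subset_erase.2 ⟨hGn, hxG⟩).ssubset_of_ne fun h =>
    hGF (h ▸ erase_mem_lanternFam hx)

/-- An induced `K_{s,t}` in which `G` is a lower vertex, the upper vertices being the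
co-singletons `[n] ∖ {x}`, `x ∈ X`. -/
theorem containsIndKst_insert_as_lower (ht : 0 < t) (hn : 2*s + t - 1 ≤ n)
    (hGn : G ⊆ Icc 1 n) (hGF : G ∉ lanternFam n s t Ls Lt)
    {X : Finset ℕ} (hXS : X ⊆ Icc 1 (s+t-1)) (hXcard : #X = s) (hGX : Disjoint G X)
    {𝒞 : Finset (Finset ℕ)} (h𝒞F : 𝒞 ⊆ lanternFam n s t Ls Lt) (h𝒞card : #𝒞 = t - 1)
    (hanti : IsAntichain (· ⊆ ·) (↑(insert G 𝒞) : Set (Finset ℕ)))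
    (h𝒞 : ∀ D ∈ 𝒞, D ⊆ Icc 1 n ∧ Disjoint D X ∧ #D + 1 < n) :
    ContainsIndKst s t (insert G (lanternFam n s t Ls Lt)) := by
  have hXn : X ⊆ Icc 1 n := hXS.trans (Icc_subset_Icc le_rfl (by omega))
  refine containsIndKst_of_antichains ((image_erase_subset_lanternFam hXS).trans
    (subset_insert _ _)) (insert_subset_insert _ h𝒞F)
    (by rw [card_image_erase hXn, hXcard])
    (by rw [card_insert_of_notMem fun h => hGF (h𝒞F h), h𝒞card]; omega)
    (sized_image_erase hXn).isAntichain hanti fun D hD U hU => ?_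
  obtain ⟨x, hx, rfl⟩ := mem_image.1 hU
  rcases mem_insert.1 hD with rfl | hD
  · exact ssubset_erase_of_notMem_lanternFam hGn hGF (hXS hx) (disjoint_right.1 hGX hx)
  · obtain ⟨hDn, hDX, hDcard⟩ := h𝒞 D hD
    exact ssubset_erase_of_card_lt hDn (disjoint_right.1 hDX hx) (by rw [Nat.card_Icc]; omega)

/-- An induced `K_{s,t}` in which `G` is an upper vertex, the lower vertices being the
singletons `{y}`, `y ∈ Y`. -/
theorem containsIndKst_insert_as_upper (hGF : G ∉ lanternFam n s t Ls Lt) (hs : 0 < s)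
    {𝒞 : Finset (Finset ℕ)} (h𝒞F : 𝒞 ⊆ lanternFam n s t Ls Lt) (h𝒞card : #𝒞 = s - 1)
    (hanti : IsAntichain (· ⊆ ·) (↑(insert G 𝒞) : Set (Finset ℕ)))
    {Y : Finset ℕ} (hYS : Y ⊆ Icc 1 (s+t-1)) (hYcard : #Y = t)
    (hY : ∀ U ∈ insert G 𝒞, Y ⊆ U ∧ 1 < #U) :
    ContainsIndKst s t (insert G (lanternFam n s t Ls Lt)) := by
  refine containsIndKst_of_antichains (insert_subset_insert _ h𝒞F)
    ((image_singleton_subset_lanternFam hYS).trans (subset_insert _ _))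
    (by rw [card_insert_of_notMem fun h => hGF (h𝒞F h), h𝒞card]; omega)
    (by rw [card_image_singleton, hYcard]) hanti (sized_image_singleton Y).isAntichain
    fun D hD U hU => ?_
  obtain ⟨y, hy, rfl⟩ := mem_image.1 hD
  exact singleton_ssubset_of_mem ((hY U hU).1 hy) (hY U hU).2

theorem containsIndKst_of_disjoint (hts : t ≤ s) (ht : 2 ≤ t) (hn : 2*s + t - 1 ≤ n)
    (hGn : G ⊆ Icc 1 n) (hGF : G ∉ lanternFam n s t Ls Lt)
    (hGS : Disjoint G (Icc 1 (s+t-1))) :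
    ContainsIndKst s t (insert G (lanternFam n s t Ls Lt)) := by
  obtain ⟨g, hg⟩ : G.Nonempty :=
    nonempty_iff_ne_empty.2 fun h => hGF (h ▸ empty_mem_lanternFam)
  obtain ⟨X, hXS, hXcard⟩ := exists_subset_card_eq (s := Icc 1 (s+t-1)) (n := s)
    (by rw [Nat.card_Icc]; omega)
  have hYS : Icc 1 (s+t-1) \ X ⊆ Icc 1 (s+t-1) := sdiff_subset
  refine containsIndKst_insert_as_lower (by omega) hn hGn hGF hXS hXcard
    (hGS.mono_right hXS) (image_singleton_subset_lanternFam hYS)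
    (by rw [card_image_singleton, card_sdiff_of_subset hXS, Nat.card_Icc]; omega)
    (isAntichain_insert_of_incomparable (sized_image_singleton _).isAntichain ?_) ?_
  · intro D hD
    obtain ⟨y, hy, rfl⟩ := mem_image.1 hD
    have hyG : y ∉ G := disjoint_right.1 hGS (hYS hy)
    exact ⟨fun h => hyG (mem_singleton.1 (h hg) ▸ hg), fun h => hyG (singleton_subset_iff.1 h)⟩
  · intro D hD
    obtain ⟨y, hy, rfl⟩ := mem_image.1 hD
    have hyn := mem_Icc.1 (hYS hy)
    exact ⟨singleton_subset_iff.2 (mem_Icc.2 ⟨hyn.1, by omega⟩),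
      disjoint_singleton_left.2 (mem_sdiff.1 hy).2, by rw [card_singleton]; omega⟩

theorem containsIndKst_of_upperLantern (hts : t ≤ s) (ht : 2 ≤ t)
    (hLs : ∀ A ∈ powersetCard t (Icc 1 (s+t-1)), IsUpperLantern n s t A (Ls A))
    (hGn : G ⊆ Icc 1 n) (hGF : G ∉ lanternFam n s t Ls Lt)
    (hGS : #(G ∩ Icc 1 (s+t-1)) = t) (hst : s + t ∉ G) :
    ContainsIndKst s t (insert G (lanternFam n s t Ls Lt)) := by
  have hA : G ∩ Icc 1 (s+t-1) ∈ powersetCard t (Icc 1 (s+t-1)) :=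
    mem_powersetCard.2 ⟨inter_subset_right, hGS⟩
  have hLsF := upperLantern_subset_lanternFam (n := n) (Ls := Ls) (Lt := Lt) hA
  have hGB : G ⊆ (G ∩ Icc 1 (s+t-1)) ∪ Icc (s+t+1) n := fun v hv => by
    have := mem_Icc.1 (hGn hv)
    have : v ≠ s + t := fun h => hst (h ▸ hv)
    by_cases hvS : v ≤ s + t - 1
    · exact mem_union_left _ (mem_inter.2 ⟨hv, mem_Icc.2 ⟨by omega, hvS⟩⟩)
    · exact mem_union_right _ (mem_Icc.2 ⟨by omega, by omega⟩)
  obtain ⟨𝒞, h𝒞L, h𝒞card, hsized⟩ := (hLs _ hA).1.exists_level_of_between (by omega)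
    inter_subset_left hGB fun h => hGF (hLsF h)
  have hGcard : t ≤ #G := hGS ▸ card_le_card inter_subset_left
  refine containsIndKst_insert_as_upper hGF (by omega) (h𝒞L.trans hLsF) h𝒞card
    hsized.isAntichain inter_subset_right hGS fun U hU => ⟨?_, by rw [hsized hU]; omega⟩
  rcases mem_insert.1 hU with rfl | hU
  · exact inter_subset_left
  · exact ((hLs _ hA).1.subset_of_mem (h𝒞L hU)).1

theorem containsIndKst_of_lowerLantern (hts : t ≤ s) (ht : 2 ≤ t) (hn : 2*s + t - 1 ≤ n)
    (hLt : ∀ A ∈ powersetCard (t-1) (Icc 1 (s+t-1)),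
      IsLowerLantern n s t (insert (s+t) A) (Lt (insert (s+t) A)))
    (hGn : G ⊆ Icc 1 n) (hGF : G ∉ lanternFam n s t Ls Lt)
    (hGS : #(G ∩ Icc 1 (s+t-1)) = t - 1) (hst : s + t ∈ G) :
    ContainsIndKst s t (insert G (lanternFam n s t Ls Lt)) := by
  set A := G ∩ Icc 1 (s+t-1)
  have hA : A ∈ powersetCard (t-1) (Icc 1 (s+t-1)) :=
    mem_powersetCard.2 ⟨inter_subset_right, hGS⟩
  have hLtF := lowerLantern_subset_lanternFam (n := n) (Ls := Ls) (Lt := Lt) hA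
  set B := insert (s+t) A ∪ Icc (s+t+1) n
  have hRS : insert (s+t) A ⊆ Icc 1 (s+t) :=
    insert_subset (by simp; omega) (inter_subset_right.trans (Icc_subset_Icc le_rfl (by omega)))
  have hGB : G ⊆ B := fun v hv => by
    have := mem_Icc.1 (hGn hv)
    by_cases hvS : v ≤ s + t
    · refine mem_union_left _ ?_
      rcases eq_or_lt_of_le hvS with rfl | hvS
      · exact mem_insert_self _ _
      · exact mem_insert_of_mem (mem_inter.2 ⟨hv, mem_Icc.2 ⟨by omega, by omega⟩⟩)
    · exact mem_union_right _ (mem_Icc.2 ⟨by omega, by omega⟩)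
  obtain ⟨𝒞, h𝒞L, h𝒞card, hsized⟩ := (hLt _ hA).1.exists_level_of_between (by omega)
    (insert_subset hst inter_subset_left) hGB fun h => hGF (hLtF h)
  obtain ⟨X, hXA, hXcard⟩ := exists_subset_card_eq (s := Icc 1 (s+t-1) \ A) (n := s)
    (by rw [card_sdiff_of_subset inter_subset_right, Nat.card_Icc, hGS]; omega)
  have hXS : X ⊆ Icc 1 (s+t-1) := hXA.trans sdiff_subset
  have hBX : Disjoint B X := disjoint_right.2 fun x hx hxB => by
    have hxS := mem_Icc.1 (hXS hx)
    rcases mem_union.1 hxB with hxR | hxH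
    · rcases mem_insert.1 hxR with rfl | hxA
      · omega
      · exact (mem_sdiff.1 (hXA hx)).2 hxA
    · have := mem_Icc.1 hxH; omega
  have hstA : s + t ∉ A := fun h => by have := mem_Icc.1 (inter_subset_right h); omega
  have hBcard : #B = n - s := by rw [card_union_Icc hRS, card_insert_of_notMem hstA, hGS]; omega
  refine containsIndKst_insert_as_lower (by omega) hn hGn hGF hXS hXcard (hBX.mono_left hGB)
    (h𝒞L.trans hLtF) h𝒞card hsized.isAntichain fun D hD => ?_
  have hDB := ((hLt _ hA).1.subset_of_mem (h𝒞L hD)).2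
  have hDcard : #D = #G := hsized (mem_insert_of_mem hD)
  refine ⟨hDB.trans (union_Icc_subset_Icc hRS (by omega)), hBX.mono_left hDB, ?_⟩
  have := card_le_card hGB
  omega

/-- Here `G` is completed by the second level `R ∪ {z}` of a lower lantern with bottom
`R = A ∪ {s+t}`, where `A ⊇ G ∩ [s+t-1]` has `t-1` elements. -/
theorem containsIndKst_of_lowerLantern_second (hts : t ≤ s) (ht : 2 ≤ t)
    (hn : 2*s + t - 1 ≤ n)
    (hLt : ∀ A ∈ powersetCard (t-1) (Icc 1 (s+t-1)),
      IsLowerLantern n s t (insert (s+t) A) (Lt (insert (s+t) A)))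
    (hGn : G ⊆ Icc 1 n) (hGF : G ∉ lanternFam n s t Ls Lt) (hG2 : G ∉ lanternG2 s t)
    (hGS : (G ∩ Icc 1 (s+t-1)).Nonempty) (hGSt : #(G ∩ Icc 1 (s+t-1)) < t)
    (hnotC2 : ¬ (#(G ∩ Icc 1 (s+t-1)) = t - 1 ∧ s + t ∈ G)) :
    ContainsIndKst s t (insert G (lanternFam n s t Ls Lt)) := by
  obtain ⟨A, hGA, hAS, hAcard⟩ := exists_subsuperset_card_eq (n := t - 1)
    (inter_subset_right : G ∩ Icc 1 (s+t-1) ⊆ _) (by omega) (by rw [Nat.card_Icc]; omega)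
  have hA : A ∈ powersetCard (t-1) (Icc 1 (s+t-1)) := mem_powersetCard.2 ⟨hAS, hAcard⟩
  have hLtF := lowerLantern_subset_lanternFam (n := n) (Ls := Ls) (Lt := Lt) hA
  set R := insert (s+t) A
  set Z := Icc (s+t+1) (s+2*t-1)
  have hRZ : ∀ z ∈ Z, z ∉ R := fun z hz hzR => by
    have := mem_Icc.1 hz
    rcases mem_insert.1 hzR with rfl | hzA
    · omega
    · have := mem_Icc.1 (hAS hzA); omega
  have hRcard : #R = t := by
    rw [card_insert_of_notMem fun h => by have := mem_Icc.1 (hAS h); omega, hAcard]; omega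
  set 𝒬 := Z.image fun z => insert z R
  have h𝒬L : 𝒬 ⊆ Lt R := fun Q hQ => by
    obtain ⟨z, hz, rfl⟩ := mem_image.1 hQ
    exact (hLt A hA).1.insert_mem_of_mem_firstIncrementSet ((hLt A hA).2 ▸ hz)
  have h𝒬sized : (𝒬 : Set (Finset ℕ)).Sized (t + 1) := fun Q hQ => by
    obtain ⟨z, hz, rfl⟩ := mem_image.1 (mem_coe.1 hQ)
    rw [card_insert_of_notMem (hRZ z hz), hRcard]
  have hRQ : ∀ Q ∈ 𝒬, R ⊆ Q ∧ Q ⊆ Icc 1 (s+2*t-1) := fun Q hQ => by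
    obtain ⟨z, hz, rfl⟩ := mem_image.1 hQ
    refine ⟨subset_insert _ _, insert_subset (Icc_subset_Icc (by omega) le_rfl hz) ?_⟩
    exact insert_subset (by simp; omega) (hAS.trans (Icc_subset_Icc le_rfl (by omega)))
  obtain ⟨X, hXA, hXcard⟩ := exists_subset_card_eq (s := Icc 1 (s+t-1) \ A) (n := s)
    (by rw [card_sdiff_of_subset hAS, Nat.card_Icc, hAcard]; omega)
  have hXS : X ⊆ Icc 1 (s+t-1) := hXA.trans sdiff_subset
  have hXR : ∀ x ∈ X, x ∉ R := fun x hx hxR => by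
    have := mem_Icc.1 (hXS hx)
    rcases mem_insert.1 hxR with rfl | hxA
    · omega
    · exact (mem_sdiff.1 (hXA hx)).2 hxA
  refine containsIndKst_insert_as_lower (by omega) hn hGn hGF hXS hXcard
    (disjoint_right.2 fun x hx hxG => (mem_sdiff.1 (hXA hx)).2
      (hGA (mem_inter.2 ⟨hxG, hXS hx⟩)))
    (h𝒬L.trans hLtF)
    (by rw [card_image_of_injOn ((insert_inj_on R).mono fun z hz => hRZ z hz), Nat.card_Icc]
        omega)
    (isAntichain_insert_of_incomparable h𝒬sized.isAntichain fun Q hQ => ⟨?_, ?_⟩) ?_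
  · -- A proper subset of `Q` would be a singleton of `F₄` or a member of `G₂`.
    intro hGQ
    have hGQ' : G ⊂ Q := hGQ.ssubset_of_ne fun h => hGF (hLtF (h𝒬L (h ▸ hQ)))
    have hGcard := card_lt_card hGQ'
    rw [h𝒬sized hQ] at hGcard
    have hG1 := card_le_one_of_notMem_lanternG2 (hGQ.trans (hRQ Q hQ).2) hG2 (by omega)
    obtain ⟨g, hg⟩ := hGS
    have hGg : G = {g} := eq_singleton_iff_unique_mem.2
      ⟨(mem_inter.1 hg).1, fun x hx => card_le_one.1 hG1 x hx g (mem_inter.1 hg).1⟩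
    exact hGF (hGg ▸ singleton_mem_lanternFam (mem_inter.1 hg).2)
  · intro hQG
    have hRG := (hRQ Q hQ).1.trans hQG
    have := card_le_card (subset_inter (subset_insert _ _ |>.trans hRG) hAS)
    exact hnotC2 ⟨by omega, hRG (mem_insert_self _ _)⟩
  · intro Q hQ
    refine ⟨(hRQ Q hQ).2.trans (Icc_subset_Icc le_rfl (by omega)), ?_,
      by rw [h𝒬sized hQ]; omega⟩
    obtain ⟨z, hz, rfl⟩ := mem_image.1 hQ
    refine disjoint_right.2 fun x hx hxQ => ?_
    rcases mem_insert.1 hxQ with rfl | hxR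
    · have := mem_Icc.1 hz; have := mem_Icc.1 (hXS hx); omega
    · exact hXR x hx hxR

theorem containsIndKst_of_upperLantern_penultimate (hts : t ≤ s) (ht : 2 ≤ t)
    (hn : 2*s + t - 1 ≤ n)
    (hLs : ∀ A ∈ powersetCard t (Icc 1 (s+t-1)), IsUpperLantern n s t A (Ls A))
    (hGF : G ∉ lanternFam n s t Ls Lt) (hGSt : t < #(G ∩ Icc 1 (s+t)))
    (hH : ∀ y ∈ Icc (s+t+1) (2*s+t-1), ¬ (Icc (s+t+1) n).erase y ⊆ G) :
    ContainsIndKst s t (insert G (lanternFam n s t Ls Lt)) := by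
  have hGS : t ≤ #(G ∩ Icc 1 (s+t-1)) := by
    have hsub : G ∩ Icc 1 (s+t) ⊆ insert (s+t) (G ∩ Icc 1 (s+t-1)) := fun v hv => by
      rw [mem_insert, mem_inter, mem_Icc]
      have := mem_Icc.1 (mem_inter.1 hv).2
      by_cases hvst : v = s + t
      · exact Or.inl hvst
      · exact Or.inr ⟨(mem_inter.1 hv).1, by omega, by omega⟩
    have := (card_le_card hsub).trans (card_insert_le _ _)
    omega
  obtain ⟨A, hAGS, hAcard⟩ := exists_subset_card_eq hGS
  have hAS : A ⊆ Icc 1 (s+t-1) := hAGS.trans inter_subset_right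
  have hAG : A ⊆ G := hAGS.trans inter_subset_left
  have hA : A ∈ powersetCard t (Icc 1 (s+t-1)) := mem_powersetCard.2 ⟨hAS, hAcard⟩
  have hLsF := upperLantern_subset_lanternFam (n := n) (Ls := Ls) (Lt := Lt) hA
  set B := A ∪ Icc (s+t+1) n
  set I := Icc (s+t+1) (2*s+t-1)
  have hIA : ∀ y ∈ I, y ∉ A := fun y hy hyA => by
    have := mem_Icc.1 hy; have := mem_Icc.1 (hAS hyA); omega
  have hIB : I ⊆ B := (Icc_subset_Icc le_rfl (by omega)).trans subset_union_right
  have hBcard : #B = t + (n - (s+t)) := by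
    rw [card_union_Icc (hAS.trans (Icc_subset_Icc le_rfl (by omega))), hAcard]
  have h𝒫L : I.image B.erase ⊆ Ls A := fun P hP => by
    obtain ⟨y, hy, rfl⟩ := mem_image.1 hP
    exact (hLs A hA).1.erase_mem_of_mem_lastIncrementSet ((hLs A hA).2 ▸ hy)
  have hGB : ¬ G ⊆ B := by
    obtain ⟨v, hvG, hvA⟩ := not_subset.1 fun h : G ∩ Icc 1 (s+t) ⊆ A => by
      have := card_le_card h; omega
    have hv := mem_Icc.1 (mem_inter.1 hvG).2
    intro h
    rcases mem_union.1 (h (mem_inter.1 hvG).1) with hvA' | hvH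
    · exact hvA hvA'
    · have := mem_Icc.1 hvH; omega
  refine containsIndKst_insert_as_upper hGF (by omega) (h𝒫L.trans hLsF)
    (by rw [card_image_erase hIB, Nat.card_Icc]; omega)
    (isAntichain_insert_of_incomparable (sized_image_erase hIB).isAntichain fun P hP => ?_)
    hAS hAcard fun U hU => ?_
  · obtain ⟨y, hy, rfl⟩ := mem_image.1 hP
    exact ⟨fun h => hGB (h.trans (erase_subset _ _)),
      fun h => hH y hy ((erase_subset_erase y subset_union_right).trans h)⟩
  · rcases mem_insert.1 hU with rfl | hU
    · exact ⟨hAG, by have := card_le_card hAG; omega⟩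
    · obtain ⟨y, hy, rfl⟩ := mem_image.1 hU
      refine ⟨subset_erase.2 ⟨subset_union_left, hIA y hy⟩, ?_⟩
      rw [card_erase_of_mem (hIB hy), hBcard]
      omega

theorem exists_eq_erase_of_notMem_lanternG1 (hts : t ≤ s) (hGn : G ⊆ Icc 1 n)
    (hGtop : G ≠ Icc 1 n) (hG1 : G ∉ lanternG1 n s t) (hGSt : t < #(G ∩ Icc 1 (s+t)))
    {y : ℕ} (hy : y ∈ Icc (s+t+1) (2*s+t-1)) (hHG : (Icc (s+t+1) n).erase y ⊆ G) :
    ∃ v ∈ Icc 1 n, G = (Icc 1 n).erase v := by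
  set K := Icc 1 n \ G
  have hK : K ⊆ (Icc 1 (s+t) \ G) ∪ {y} := fun v hv => by
    obtain ⟨hvn, hvG⟩ := mem_sdiff.1 hv
    have := mem_Icc.1 hvn
    by_cases hvst : v ≤ s + t
    · exact mem_union_left _ (mem_sdiff.2 ⟨mem_Icc.2 ⟨this.1, hvst⟩, hvG⟩)
    · refine mem_union_right _ (mem_singleton.2 ?_)
      by_contra hvy
      exact hvG (hHG (mem_erase.2 ⟨hvy, mem_Icc.2 ⟨by omega, this.2⟩⟩))
  have hKcard : #K ≤ s := by
    have h1 := card_sdiff_add_card_inter (Icc 1 (s+t)) G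
    rw [inter_comm, Nat.card_Icc] at h1
    have := (card_le_card hK).trans (card_union_le _ _)
    rw [card_singleton] at this
    omega
  have hKI : K ⊆ Icc 1 (2*s+t-1) := hK.trans (union_subset
    (sdiff_subset.trans (Icc_subset_Icc le_rfl (by omega)))
    (singleton_subset_iff.2 (Icc_subset_Icc (by omega) le_rfl hy)))
  have hGK : Icc 1 n \ K = G := Finset.sdiff_sdiff_eq_self hGn
  obtain ⟨v, hv⟩ : K.Nonempty := nonempty_iff_ne_empty.2 fun h => hGtop (by
    rw [← hGK, h, sdiff_empty])
  have hKv : K = {v} := eq_singleton_iff_unique_mem.2 ⟨hv, fun w hw =>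
    card_le_one.1 (card_le_one_of_notMem_lanternG1 hKI (hGK ▸ hG1) hKcard) w hw v hv⟩
  exact ⟨v, (mem_sdiff.1 hv).1, by rw [← hGK, hKv, sdiff_singleton_eq_erase]⟩

theorem containsIndKst_of_eq_erase (hts : t ≤ s) (ht : 2 ≤ t) (hn : 2*s + t - 1 ≤ n)
    (hGF : G ∉ lanternFam n s t Ls Lt) {v : ℕ} (hv : v ∈ Icc 1 n)
    (hG : G = (Icc 1 n).erase v) :
    ContainsIndKst s t (insert G (lanternFam n s t Ls Lt)) := by
  have hvS : v ∉ Icc 1 (s+t-1) := fun hvS => hGF (hG ▸ erase_mem_lanternFam hvS)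
  have hSn : Icc 1 (s+t-1) ⊆ Icc 1 n := Icc_subset_Icc le_rfl (by omega)
  obtain ⟨X, hXS, hXcard⟩ := exists_subset_card_eq (s := Icc 1 (s+t-1)) (n := s - 1)
    (by rw [Nat.card_Icc]; omega)
  have hvX : insert v X ⊆ Icc 1 n := insert_subset hv (hXS.trans hSn)
  have h𝒰 : insert G (X.image (Icc 1 n).erase) = (insert v X).image (Icc 1 n).erase := by
    rw [image_insert, hG]
  refine containsIndKst_insert_as_upper hGF (by omega) (image_erase_subset_lanternFam hXS)
    (by rw [card_image_erase (hXS.trans hSn), hXcard])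
    (h𝒰 ▸ (sized_image_erase hvX).isAntichain) sdiff_subset
    (by rw [card_sdiff_of_subset hXS, Nat.card_Icc, hXcard]; omega) fun U hU => ?_
  obtain ⟨w, hw, rfl⟩ := mem_image.1 (h𝒰 ▸ hU)
  have hwY : w ∉ Icc 1 (s+t-1) \ X := fun hwY => by
    rcases mem_insert.1 hw with rfl | hwX
    · exact hvS (mem_sdiff.1 hwY).1
    · exact (mem_sdiff.1 hwY).2 hwX
  refine ⟨subset_erase.2 ⟨sdiff_subset.trans hSn, hwY⟩, ?_⟩
  rw [card_erase_of_mem (hvX hw), Nat.card_Icc]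
  omega

theorem containsIndKst_of_card_inter_le (hts : t ≤ s) (ht : 2 ≤ t) (hn : 2*s + t - 1 ≤ n)
    (hLs : ∀ A ∈ powersetCard t (Icc 1 (s+t-1)), IsUpperLantern n s t A (Ls A))
    (hLt : ∀ A ∈ powersetCard (t-1) (Icc 1 (s+t-1)),
      IsLowerLantern n s t (insert (s+t) A) (Lt (insert (s+t) A)))
    (hGn : G ⊆ Icc 1 n) (hGF : G ∉ lanternFam n s t Ls Lt) (hG2 : G ∉ lanternG2 s t)
    (hGSt : #(G ∩ Icc 1 (s+t)) ≤ t) :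
    ContainsIndKst s t (insert G (lanternFam n s t Ls Lt)) := by
  have hsub : G ∩ Icc 1 (s+t-1) ⊆ G ∩ Icc 1 (s+t) :=
    inter_subset_inter_left (Icc_subset_Icc le_rfl (by omega))
  have hlt : s + t ∈ G → #(G ∩ Icc 1 (s+t-1)) < #(G ∩ Icc 1 (s+t)) := fun hst =>
    card_lt_card <| ssubset_iff_of_subset hsub |>.2
      ⟨s + t, mem_inter.2 ⟨hst, mem_Icc.2 ⟨by omega, le_rfl⟩⟩, fun h => by
        have := mem_Icc.1 (mem_inter.1 h).2; omega⟩
  rcases (G ∩ Icc 1 (s+t-1)).eq_empty_or_nonempty with hGS | hGS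
  · exact containsIndKst_of_disjoint hts ht hn hGn hGF (disjoint_iff_inter_eq_empty.2 hGS)
  by_cases hC1 : #(G ∩ Icc 1 (s+t-1)) = t
  · exact containsIndKst_of_upperLantern hts ht hLs hGn hGF hC1 fun hst => by
      have := hlt hst; omega
  by_cases hC2 : #(G ∩ Icc 1 (s+t-1)) = t - 1 ∧ s + t ∈ G
  · exact containsIndKst_of_lowerLantern hts ht hn hLt hGn hGF hC2.1 hC2.2
  · have := card_le_card hsub
    exact containsIndKst_of_lowerLantern_second hts ht hn hLt hGn hGF hG2 hGS (by omega) hC2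

theorem containsIndKst_of_lt_card_inter (hts : t ≤ s) (ht : 2 ≤ t) (hn : 2*s + t - 1 ≤ n)
    (hLs : ∀ A ∈ powersetCard t (Icc 1 (s+t-1)), IsUpperLantern n s t A (Ls A))
    (hGn : G ⊆ Icc 1 n) (hGF : G ∉ lanternFam n s t Ls Lt) (hG1 : G ∉ lanternG1 n s t)
    (hGSt : t < #(G ∩ Icc 1 (s+t))) :
    ContainsIndKst s t (insert G (lanternFam n s t Ls Lt)) := by
  by_cases hH : ∃ y ∈ Icc (s+t+1) (2*s+t-1), (Icc (s+t+1) n).erase y ⊆ G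
  · obtain ⟨y, hy, hHG⟩ := hH
    obtain ⟨v, hv, hG⟩ := exists_eq_erase_of_notMem_lanternG1 hts hGn
      (fun h => hGF (h ▸ Icc_mem_lanternFam)) hG1 hGSt hy hHG
    exact containsIndKst_of_eq_erase hts ht hn hGF hv hG
  · exact containsIndKst_of_upperLantern_penultimate hts ht hn hLs hGF hGSt
      fun y hy h => hH ⟨y, hy, h⟩

end LanternFamily

/-- the completed construction `F = F' ∪ F₅` is induced
`K_{s,t}`-saturated. -/
theorem stmt11
    (n s t : ℕ) (hts : t ≤ s) (ht : 2 ≤ t) (hn : 2*s + t - 1 ≤ n)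
    (Ls Lt : Finset ℕ → Finset (Finset ℕ))
    (hLs : ∀ A ∈ Finset.powersetCard t (Finset.Icc 1 (s+t-1)),
      IsUpperLantern n s t A (Ls A))
    (hLt : ∀ A ∈ Finset.powersetCard (t-1) (Finset.Icc 1 (s+t-1)),
      IsLowerLantern n s t (insert (s+t) A) (Lt (insert (s+t) A)))
    (F5 : Finset (Finset ℕ))
    (hF5sub : F5 ⊆ lanternG1 n s t ∪ lanternG2 s t)
    (hF5free : ¬ ContainsIndKst s t (lanternFam n s t Ls Lt ∪ F5))
    (hF5max : ∀ X ∈ lanternG1 n s t ∪ lanternG2 s t, X ∉ F5 →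
      ContainsIndKst s t (lanternFam n s t Ls Lt ∪ insert X F5))
    : IsIndKstSaturated n s t (lanternFam n s t Ls Lt ∪ F5) := by
  refine ⟨fun X hX => ?_, hF5free, fun G hGn hGF => ?_⟩
  · rcases mem_union.1 hX with hX | hX
    · exact subset_Icc_of_mem_lanternFam hts (by omega) hn hLs hLt hX
    · exact subset_Icc_of_mem_lanternG hts hn (hF5sub hX)
  by_cases hG : G ∈ lanternG1 n s t ∪ lanternG2 s t
  · rw [← union_insert]
    exact hF5max G hG fun h => hGF (mem_union_right _ h)
  have hGF' : G ∉ lanternFam n s t Ls Lt := fun h => hGF (mem_union_left _ h)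
  refine ContainsIndKst.mono ?_ (insert_subset_insert G subset_union_left)
  rcases le_or_gt #(G ∩ Icc 1 (s+t)) t with hGSt | hGSt
  · exact containsIndKst_of_card_inter_le hts ht hn hLs hLt hGn hGF'
      (fun h => hG (mem_union_right _ h)) hGSt
  · exact containsIndKst_of_lt_card_inter hts ht hn hLs hGn hGF'
      (fun h => hG (mem_union_left _ h)) hGSt
end

section
/- Let P be a finite poset with legs a, b, let F ⊆ 2^[n] be an induced P-saturated family, and let x ∈ [n] with {x} ∉ F. If C_x is a partner of x of maximum cardinality among all partners of x, then C_x ∪ {x} ∈ F and C_x ∪ {x} ≠ ∅. -/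
open Finset

/-- A family of finite sets contains an induced copy of the poset `P`. -/
def ContainsIndCopy (P : Type*) [PartialOrder P] (F : Finset (Finset ℕ)) : Prop :=
  ∃ f : P → Finset ℕ, Function.Injective f ∧ (∀ p, f p ∈ F) ∧
    ∀ p q : P, p ≤ q ↔ f p ⊆ f q

/-- `F ⊆ 2^[n]` is induced `P`-saturated. -/
def IsIndPSaturated (n : ℕ) (P : Type*) [PartialOrder P] (F : Finset (Finset ℕ)) : Prop :=
  (∀ A ∈ F, A ⊆ Finset.Icc 1 n) ∧
  ¬ ContainsIndCopy P F ∧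
  ∀ G ⊆ Finset.Icc 1 n, G ∉ F → ContainsIndCopy P (insert G F)

/-- `sat*(n, P)`: minimum size of an induced `P`-saturated family in `2^[n]`. -/
noncomputable def satStarP (n : ℕ) (P : Type*) [PartialOrder P] : ℕ :=
  sInf {m | ∃ F : Finset (Finset ℕ), IsIndPSaturated n P F ∧ F.card = m}

/-- `a` and `b` are legs of `P`: incomparable, and each strictly smaller than
every element of `P \ {a, b}`. -/
def IsLegs (P : Type*) [PartialOrder P] (a b : P) : Prop :=
  ¬ a ≤ b ∧ ¬ b ≤ a ∧ ∀ c : P, c ≠ a → c ≠ b → a < c ∧ b < c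

/-- `C ∈ F` is a partner of `x`: `{x}` and `C` form the legs of some induced
copy of `P` in `F ∪ {{x}}`. -/
def IsPartner (P : Type*) [PartialOrder P] (a b : P) (F : Finset (Finset ℕ))
    (x : ℕ) (C : Finset ℕ) : Prop :=
  C ∈ F ∧ ∃ f : P → Finset ℕ, Function.Injective f ∧
    (∀ p, f p ∈ insert ({x} : Finset ℕ) F) ∧
    (∀ p q : P, p ≤ q ↔ f p ⊆ f q) ∧
    ({f a, f b} : Set (Finset ℕ)) = {({x} : Finset ℕ), C}

/-!
Suppose `G = Cₓ ∪ {x} ∉ F`. Saturation gives an induced copy `f` of `P` in `F ∪ {G}`, and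
`G = f p` for some `p`, since `F` has no copy. If `p` is a leg, shrinking that leg to `{x}` (when
`Cₓ ⊆ f b`) makes the other leg `f b ⊋ Cₓ` a larger partner of `x`, and shrinking it to `Cₓ`
(otherwise) gives a copy inside `F`. If `p` is not a leg, the legs of `f` lie strictly below `G`,
while the elements above the legs of a partner copy of `Cₓ` contain `{x} ∪ Cₓ = G`; grafting the
legs of `f` onto that copy again gives a copy inside `F`.
-/

section Legs

variable {P : Type*} [PartialOrder P] {a b : P}

theorem IsLegs.symm (hlegs : IsLegs P a b) : IsLegs P b a :=
  ⟨hlegs.2.1, hlegs.1, fun c hca hcb => (hlegs.2.2 c hcb hca).symm⟩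

theorem IsLegs.ne (hlegs : IsLegs P a b) : a ≠ b := fun h => hlegs.1 h.le

section LegReplacement

variable [DecidableEq P] {β : Type*} [PartialOrder β] {f : P → β}

theorem IsLegs.le_iff_update_legs (hlegs : IsLegs P a b) (hf : ∀ p q, p ≤ q ↔ f p ≤ f q)
    {A B : β} (hAB : ¬ A ≤ B) (hBA : ¬ B ≤ A) (hA : ∀ c, c ≠ a → c ≠ b → A < f c)
    (hB : ∀ c, c ≠ a → c ≠ b → B < f c) (p q : P) :
    p ≤ q ↔ Function.update (Function.update f a A) b B p ≤
      Function.update (Function.update f a A) b B q := by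
  have hne := hlegs.ne
  obtain ⟨hab, hba, hc⟩ := hlegs
  set g := Function.update (Function.update f a A) b B
  have hga : g a = A := by simp [g, hne]
  have hgb : g b = B := by simp [g]
  have hgc : ∀ c, c ≠ a → c ≠ b → g c = f c := fun c hca hcb => by simp [g, hca, hcb]
  have trichotomy : ∀ r, r = a ∨ r = b ∨ r ≠ a ∧ r ≠ b := fun r => by tauto
  rcases trichotomy p with rfl | rfl | ⟨hpa, hpb⟩ <;>
    rcases trichotomy q with rfl | rfl | ⟨hqa, hqb⟩
  · simp
  · rw [hga, hgb]; exact iff_of_false hab hAB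
  · rw [hga, hgc q hqa hqb]; exact iff_of_true (hc q hqa hqb).1.le (hA q hqa hqb).le
  · rw [hga, hgb]; exact iff_of_false hba hBA
  · simp
  · rw [hgb, hgc q hqa hqb]; exact iff_of_true (hc q hqa hqb).2.le (hB q hqa hqb).le
  · rw [hga, hgc p hpa hpb]; exact iff_of_false (hc p hpa hpb).1.not_ge (hA p hpa hpb).not_ge
  · rw [hgb, hgc p hpa hpb]; exact iff_of_false (hc p hpa hpb).2.not_ge (hB p hpa hpb).not_ge
  · rw [hgc p hpa hpb, hgc q hqa hqb]; exact hf p q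

theorem IsLegs.le_iff_update_of_lt (hlegs : IsLegs P a b) (hf : ∀ p q, p ≤ q ↔ f p ≤ f q)
    {A : β} (hA : A < f a) (hAb : ¬ A ≤ f b) (p q : P) :
    p ≤ q ↔ Function.update f a A p ≤ Function.update f a A q := by
  have hmono : StrictMono f := (OrderEmbedding.ofMapLEIff f fun p q => (hf p q).symm).strictMono
  have hfb : ¬ f b ≤ A := fun h => hlegs.2.1 ((hf b a).2 (h.trans hA.le))
  have key := hlegs.le_iff_update_legs hf hAb hfb
    (fun c hca hcb => hA.trans (hmono (hlegs.2.2 c hca hcb).1))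
    (fun c hca hcb => hmono (hlegs.2.2 c hca hcb).2) p q
  rwa [← Function.update_of_ne hlegs.ne.symm A f, Function.update_eq_self] at key

end LegReplacement

theorem containsIndCopy_of_le_iff {F : Finset (Finset ℕ)} {f : P → Finset ℕ}
    (hmem : ∀ p, f p ∈ F) (hf : ∀ p q, p ≤ q ↔ f p ⊆ f q) : ContainsIndCopy P F :=
  ⟨f, (OrderEmbedding.ofMapLEIff f fun p q => (hf p q).symm).injective, hmem, hf⟩

section Partner

variable {F : Finset (Finset ℕ)} {x : ℕ} {C : Finset ℕ}

theorem isPartner_of_le_iff (hC : C ∈ F) {f : P → Finset ℕ}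
    (hmem : ∀ p, f p ∈ insert {x} F) (hf : ∀ p q, p ≤ q ↔ f p ⊆ f q)
    (hfa : f a = {x}) (hfb : f b = C) : IsPartner P a b F x C :=
  ⟨hC, f, (OrderEmbedding.ofMapLEIff f fun p q => (hf p q).symm).injective, hmem, hf,
    by rw [hfa, hfb]⟩

theorem IsPartner.symm (hC : IsPartner P a b F x C) : IsPartner P b a F x C := by
  obtain ⟨hCF, f, hinj, hmem, hf, hlegs⟩ := hC
  exact ⟨hCF, f, hinj, hmem, hf, by rwa [Set.pair_comm]⟩

theorem IsPartner.incomparable (hlegs : IsLegs P a b) (hC : IsPartner P a b F x C) :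
    ¬ {x} ⊆ C ∧ ¬ C ⊆ {x} := by
  obtain ⟨-, f, -, -, hf, hfab⟩ := hC
  have hab : ¬ f a ⊆ f b := fun h => hlegs.1 ((hf a b).2 h)
  have hba : ¬ f b ⊆ f a := fun h => hlegs.2.1 ((hf b a).2 h)
  rcases Set.pair_eq_pair_iff.1 hfab with ⟨ha, hb⟩ | ⟨ha, hb⟩
  · rw [ha, hb] at hab hba; exact ⟨hab, hba⟩
  · rw [ha, hb] at hab hba; exact ⟨hba, hab⟩

theorem IsPartner.exists_copy_above (hlegs : IsLegs P a b) (hC : IsPartner P a b F x C) :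
    ∃ g : P → Finset ℕ, (∀ p q, p ≤ q ↔ g p ⊆ g q) ∧
      ∀ c, c ≠ a → c ≠ b → g c ∈ F ∧ insert x C ⊆ g c := by
  obtain ⟨-, g, hinj, hmem, hg, hgab⟩ := hC
  have hx : {x} = g a ∨ {x} = g b := by
    simpa using (hgab.symm ▸ Set.mem_insert _ _ : ({x} : Finset ℕ) ∈ ({g a, g b} : Set _))
  have hC : C = g a ∨ C = g b := by
    simpa using (hgab.symm ▸ Set.mem_insert_of_mem _ rfl : C ∈ ({g a, g b} : Set _))
  refine ⟨g, hg, fun c hca hcb => ⟨?_, ?_⟩⟩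
  · refine (mem_insert.1 (hmem c)).resolve_left fun h => ?_
    exact hx.elim (fun hx => hca (hinj (h.trans hx))) (fun hx => hcb (hinj (h.trans hx)))
  · have hac : g a ⊆ g c := (hg a c).1 (hlegs.2.2 c hca hcb).1.le
    have hbc : g b ⊆ g c := (hg b c).1 (hlegs.2.2 c hca hcb).2.le
    rw [insert_eq, union_subset_iff]
    exact ⟨hx.elim (· ▸ hac) (· ▸ hbc), hC.elim (· ▸ hac) (· ▸ hbc)⟩

end Partner

section Saturation

variable {F : Finset (Finset ℕ)} {x : ℕ} {Cx : Finset ℕ}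

theorem IsLegs.containsIndCopy_of_graft (hlegs : IsLegs P a b) {f g : P → Finset ℕ}
    (hf : ∀ p q, p ≤ q ↔ f p ⊆ f q) (hg : ∀ p q, p ≤ q ↔ g p ⊆ g q)
    (hfa : f a ∈ F) (hfb : f b ∈ F) (hgF : ∀ c, c ≠ a → c ≠ b → g c ∈ F)
    {p : P} (hpa : p ≠ a) (hpb : p ≠ b) (hfg : ∀ c, c ≠ a → c ≠ b → f p ⊆ g c) :
    ContainsIndCopy P F := by
  classical
  have hmono : StrictMono f := (OrderEmbedding.ofMapLEIff f fun p q => (hf p q).symm).strictMono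
  have hp := hlegs.2.2 p hpa hpb
  refine containsIndCopy_of_le_iff (f := Function.update (Function.update g a (f a)) b (f b))
    (fun q => ?_) (hlegs.le_iff_update_legs hg (fun h => hlegs.1 ((hf a b).2 h))
      (fun h => hlegs.2.1 ((hf b a).2 h)) (fun c hca hcb => (hmono hp.1).trans_le (hfg c hca hcb))
      (fun c hca hcb => (hmono hp.2).trans_le (hfg c hca hcb)))
  by_cases hqb : q = b
  · rw [hqb, Function.update_self]; exact hfb
  rw [Function.update_of_ne hqb]
  by_cases hqa : q = a
  · rw [hqa, Function.update_self]; exact hfa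
  rw [Function.update_of_ne hqa]; exact hgF q hqa hqb

theorem IsLegs.exists_larger_partner (hlegs : IsLegs P a b) (hnocopy : ¬ ContainsIndCopy P F)
    (hCx : IsPartner P a b F x Cx) {f : P → Finset ℕ} (hf : ∀ p q, p ≤ q ↔ f p ⊆ f q)
    (hfa : f a = insert x Cx) (hfF : ∀ p, p ≠ a → f p ∈ F) :
    ∃ C, IsPartner P a b F x C ∧ Cx.card < C.card := by
  classical
  obtain ⟨hxCx, hCxx⟩ := hCx.incomparable hlegs
  rw [singleton_subset_iff] at hxCx
  have hba := hlegs.ne.symm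
  have hfab : ¬ f a ⊆ f b := fun h => hlegs.1 ((hf a b).2 h)
  have hfba : ¬ f b ⊆ f a := fun h => hlegs.2.1 ((hf b a).2 h)
  have hCxa : Cx ⊆ f a := hfa ▸ subset_insert x Cx
  by_cases hCxb : Cx ⊆ f b
  · have hxb : x ∉ f b := fun h => hfab (hfa ▸ insert_subset h hCxb)
    have hxa : {x} ⊂ f a :=
      hfa ▸ ⟨singleton_subset_iff.2 (mem_insert_self x Cx),
        fun h => hCxx ((subset_insert x Cx).trans h)⟩
    refine ⟨f b, isPartner_of_le_iff (hfF b hba)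
      ((Function.forall_update_iff f fun _ s => s ∈ insert {x} F).2
        ⟨mem_insert_self _ _, fun p hp => mem_insert_of_mem (hfF p hp)⟩)
      (hlegs.le_iff_update_of_lt hf hxa (by rwa [singleton_subset_iff]))
      (Function.update_self ..) (Function.update_of_ne hba ..),
      card_lt_card ⟨hCxb, fun h => hfba (h.trans hCxa)⟩⟩
  · exact (hnocopy (containsIndCopy_of_le_iff
      ((Function.forall_update_iff f fun _ s => s ∈ F).2 ⟨hCx.1, hfF⟩)
      (hlegs.le_iff_update_of_lt hf (hfa ▸ ssubset_insert hxCx) hCxb))).elim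

theorem IsLegs.insert_mem_of_isPartner_of_max {n : ℕ} (hlegs : IsLegs P a b)
    (hsat : IsIndPSaturated n P F) (hx : x ∈ Icc 1 n) (hCx : IsPartner P a b F x Cx)
    (hmax : ∀ C, IsPartner P a b F x C → C.card ≤ Cx.card) : insert x Cx ∈ F := by
  obtain ⟨hsub, hnocopy, hsatur⟩ := hsat
  by_contra hG
  obtain ⟨f, hinj, hmem, hf⟩ := hsatur _ (insert_subset hx (hsub Cx hCx.1)) hG
  obtain ⟨p, hp⟩ : ∃ p, f p = insert x Cx := by
    by_contra! hno
    exact hnocopy ⟨f, hinj, fun q => (mem_insert.1 (hmem q)).resolve_left (hno q), hf⟩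
  have hfF : ∀ q, q ≠ p → f q ∈ F := fun q hq =>
    (mem_insert.1 (hmem q)).resolve_left fun h => hq (hinj (h.trans hp.symm))
  by_cases hpa : p = a
  · subst hpa
    obtain ⟨C, hC, hlt⟩ := hlegs.exists_larger_partner hnocopy hCx hf hp hfF
    exact (hmax C hC).not_gt hlt
  by_cases hpb : p = b
  · subst hpb
    obtain ⟨C, hC, hlt⟩ := hlegs.symm.exists_larger_partner hnocopy hCx.symm hf hp hfF
    exact (hmax C hC.symm).not_gt hlt
  obtain ⟨g, hg, hgF⟩ := hCx.exists_copy_above hlegs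
  exact hnocopy (hlegs.containsIndCopy_of_graft hf hg (hfF a (Ne.symm hpa))
    (hfF b (Ne.symm hpb)) (fun c hca hcb => (hgF c hca hcb).1) hpa hpb
    (fun c hca hcb => hp ▸ (hgF c hca hcb).2))

end Saturation

end Legs

theorem stmt12_general (P : Type*) [PartialOrder P] (a b : P)
    (hlegs : IsLegs P a b)
    (n : ℕ) (F : Finset (Finset ℕ)) (hsat : IsIndPSaturated n P F)
    (x : ℕ) (hx : x ∈ Finset.Icc 1 n)
    (Cx : Finset ℕ) (hCx : IsPartner P a b F x Cx)
    (hmax : ∀ C : Finset ℕ, IsPartner P a b F x C → C.card ≤ Cx.card) :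
    insert x Cx ∈ F ∧ insert x Cx ≠ ∅ :=
  ⟨hlegs.insert_mem_of_isPartner_of_max hsat hx hCx hmax, insert_ne_empty x Cx⟩

/-- if `{x} ∉ F` and `Cₓ` is a partner of `x` of maximum
cardinality, then `Cₓ ∪ {x} ∈ F` and `Cₓ ∪ {x} ≠ ∅`. -/
theorem stmt12 (P : Type*) [PartialOrder P] [Fintype P] (a b : P)
    (hlegs : IsLegs P a b)
    (n : ℕ) (F : Finset (Finset ℕ)) (hsat : IsIndPSaturated n P F)
    (x : ℕ) (hx : x ∈ Finset.Icc 1 n) (hxF : ({x} : Finset ℕ) ∉ F)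
    (Cx : Finset ℕ) (hCx : IsPartner P a b F x Cx)
    (hmax : ∀ C : Finset ℕ, IsPartner P a b F x C → C.card ≤ Cx.card) :
    insert x Cx ∈ F ∧ insert x Cx ≠ ∅ :=
  stmt12_general P a b hlegs n F hsat x hx Cx hCx hmax
end

section
/- Let P be a finite poset with legs a, b (two incomparable elements each strictly smaller than every element of P ∖ {a, b}). Then every induced P-saturated family F ⊆ 2^[n] contains the empty set ∅. -/
open Finset

/-!
Adding `∅` to a saturated family creates an induced copy of `P`, and `∅` must occur in it,
since `F` itself has none. But `∅` lies below every other set, so it can only be the image of a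
least element of `P`, and a poset with two incomparable legs has no least element.
-/

theorem IsLegs.not_isBot {P : Type*} [PartialOrder P] {a b : P} (h : IsLegs P a b) (p : P) :
    ¬ IsBot p := by
  intro hp
  obtain ⟨hab, hba, hlt⟩ := h
  rcases eq_or_ne p a with rfl | hpa
  · exact hab (hp b)
  rcases eq_or_ne p b with rfl | hpb
  · exact hba (hp a)
  exact (hlt p hpa hpb).1.not_ge (hp a)

theorem ContainsIndCopy.of_insert_empty {P : Type*} [PartialOrder P] {F : Finset (Finset ℕ)}
    (hP : ∀ p : P, ¬ IsBot p) (h : ContainsIndCopy P (insert ∅ F)) : ContainsIndCopy P F := by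
  obtain ⟨f, hinj, hmem, hiff⟩ := h
  refine ⟨f, hinj, fun p => (mem_insert.mp (hmem p)).resolve_left fun hp => ?_, hiff⟩
  exact hP p fun q => (hiff p q).mpr (hp ▸ empty_subset _)

theorem stmt14_general (P : Type*) [PartialOrder P] (a b : P)
    (hlegs : IsLegs P a b)
    (n : ℕ) (F : Finset (Finset ℕ)) (hsat : IsIndPSaturated n P F) :
    (∅ : Finset ℕ) ∈ F := by
  by_contra h
  exact hsat.2.1 ((hsat.2.2 ∅ (empty_subset _) h).of_insert_empty hlegs.not_isBot)

/-- if `P` has legs, every induced `P`-saturated family contains `∅`. -/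
theorem stmt14 (P : Type*) [PartialOrder P] [Fintype P] (a b : P)
    (hlegs : IsLegs P a b)
    (n : ℕ) (F : Finset (Finset ℕ)) (hsat : IsIndPSaturated n P F) :
    (∅ : Finset ℕ) ∈ F :=
  stmt14_general P a b hlegs n F hsat
end
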